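/- arXiv:2407.14511 — 3 statements merged into one kernel-verified Lean document; each statement's English description precedes it below -/
import Mathlib

section
/- For every positive integer n, the number of cyclic subgroups of ℤ_n × ℤ_n equals Σ_{d ∣ n} ψ(d), where ψ(d) = d · Π_{p ∣ d} (1 + 1/p) is the Dedekind psi function. -/
/-!
A cyclic subgroup `⟨x⟩` of a finite group has exactly `φ (ord x)` generators, so the number of
cyclic subgroups is `∑ₓ 1 / φ (ord x)`. In `ℤ_n × ℤ_n` exactly `d²` elements are killed by a
divisor `d` of `n`, so the numbers of elements of order `e ∣ d` sum to `d²`. The values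
`φ e * ψ e = J₂ e` of Jordan's totient have the same divisor sums, hence by Möbius inversion
exactly `φ d * ψ d` elements have order `d`, and they contribute `ψ d` cyclic subgroups.
-/

open Finset ArithmeticFunction AddSubgroup
open scoped ArithmeticFunction.zeta ArithmeticFunction.Moebius

noncomputable def dedekindPsi (d : ℕ) : ℚ := d * ∏ p ∈ d.primeFactors, (1 + 1 / (p : ℚ))

noncomputable def jordanTotient (k : ℕ) : ArithmeticFunction ℚ :=
  (pow k : ArithmeticFunction ℚ).pmul (prodPrimeFactors fun p => 1 - ((p : ℚ) ^ k)⁻¹)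

theorem jordanTotient_apply {k d : ℕ} (hd : d ≠ 0) :
    jordanTotient k d = (d : ℚ) ^ k * ∏ p ∈ d.primeFactors, (1 - ((p : ℚ) ^ k)⁻¹) := by
  simp [jordanTotient, pmul_apply, pow_apply, hd]

theorem isMultiplicative_jordanTotient (k : ℕ) : (jordanTotient k).IsMultiplicative :=
  isMultiplicative_pow.natCast.pmul (IsMultiplicative.prodPrimeFactors _)

theorem jordanTotient_prime_pow_succ {k p : ℕ} (hp : p.Prime) (j : ℕ) :
    jordanTotient k (p ^ (j + 1)) = (p : ℚ) ^ (k * (j + 1)) - (p : ℚ) ^ (k * j) := by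
  have hp₀ : (p : ℚ) ^ k ≠ 0 := pow_ne_zero _ (by exact_mod_cast hp.ne_zero)
  rw [jordanTotient_apply (pow_ne_zero _ hp.ne_zero), Nat.primeFactors_prime_pow j.succ_ne_zero hp,
    prod_singleton]
  field_simp
  push_cast
  ring

theorem sum_divisors_jordanTotient (k : ℕ) {d : ℕ} (hd : d ≠ 0) :
    ∑ e ∈ d.divisors, jordanTotient k e = (d : ℚ) ^ k := by
  have hzeta_mul : (ζ : ArithmeticFunction ℚ) * jordanTotient k = pow k := by
    rw [IsMultiplicative.eq_iff_eq_on_prime_powers _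
      (isMultiplicative_zeta.natCast.mul (isMultiplicative_jordanTotient k)) _
      isMultiplicative_pow.natCast]
    intro p i hp
    rw [coe_zeta_mul_apply, Nat.sum_divisors_prime_pow hp, natCoe_apply, pow_apply,
      if_neg (by simp [hp.ne_zero])]
    induction i with
    | zero => simp [(isMultiplicative_jordanTotient k).map_one]
    | succ i ih =>
      rw [sum_range_succ, ih, jordanTotient_prime_pow_succ hp]
      push_cast
      ring
  have := congr($hzeta_mul d)
  rwa [coe_zeta_mul_apply, natCoe_apply, pow_apply, if_neg (by simp [hd]), Nat.cast_pow] at this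

theorem totient_mul_dedekindPsi (d : ℕ) :
    (d.totient : ℚ) * dedekindPsi d = jordanTotient 2 d := by
  rcases eq_or_ne d 0 with rfl | hd
  · simp
  rw [Nat.totient_eq_mul_prod_factors, dedekindPsi, jordanTotient_apply hd, mul_mul_mul_comm,
    ← prod_mul_distrib, sq]
  congr 1
  refine prod_congr rfl fun p _ => ?_
  ring

theorem Nat.eq_of_sum_divisors_eq_of_dvd {R : Type*} [AddCommGroup R] {f g : ℕ → R} {n : ℕ}
    (hn : n ≠ 0) (h : ∀ d, d ∣ n → ∑ e ∈ d.divisors, f e = ∑ e ∈ d.divisors, g e) {d : ℕ}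
    (hd : d ∣ n) : f d = g d := by
  have hs : ∀ a b, a ∣ b → b ∈ {d | d ∣ n} → a ∈ {d | d ∣ n} := fun _ _ hab hb => hab.trans hb
  have hs₀ : 0 ∉ {d | d ∣ n} := by simpa using hn
  rw [← (sum_eq_iff_sum_smul_moebius_eq_on' _ hs hs₀).1 (fun d hd => h d hd) d hd,
    (sum_eq_iff_sum_smul_moebius_eq_on' _ hs hs₀).1 (fun d _ => rfl) d hd]

theorem Finset.sum_one_div_card_fiber_eq_card_image {α β K : Type*} [DecidableEq β]
    [DivisionSemiring K] [CharZero K] (f : α → β) (s : Finset α) :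
    ∑ x ∈ s, (1 / #{y ∈ s | f y = f x} : K) = #(s.image f) := by
  rw [← sum_fiberwise_of_maps_to (g := f) (fun x hx => mem_image_of_mem f hx), card_eq_sum_ones,
    Nat.cast_sum]
  refine sum_congr rfl fun b hb => ?_
  obtain ⟨a, ha, rfl⟩ := mem_image.1 hb
  have hfiber : (#{y ∈ s | f y = f a} : K) ≠ 0 := by
    exact_mod_cast (card_pos.2 ⟨a, by simp [ha]⟩).ne'
  rw [sum_congr rfl fun x hx => by rw [(mem_filter.1 hx).2], sum_const, nsmul_eq_mul,
    mul_one_div_cancel hfiber, Nat.cast_one]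

section FiniteAddGroup

variable {G : Type*} [AddGroup G]

theorem AddSubgroup.zmultiples_eq_zmultiples_iff_of_finite [Finite G] {x y : G} :
    zmultiples y = zmultiples x ↔ y ∈ zmultiples x ∧ addOrderOf y = addOrderOf x := by
  refine ⟨fun h => ⟨h ▸ mem_zmultiples y, by rw [← Nat.card_zmultiples, h, Nat.card_zmultiples]⟩,
    fun ⟨hy, hord⟩ => eq_of_le_of_card_ge (zmultiples_le_of_mem hy) ?_⟩
  rw [Nat.card_zmultiples, Nat.card_zmultiples, hord]

open scoped Classical in
theorem card_zmultiples_eq_zmultiples [Fintype G] (x : G) :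
    #{y : G | zmultiples y = zmultiples x} = (addOrderOf x).totient := by
  have hgen : ({y : G | zmultiples y = zmultiples x} : Finset G) =
      ({z : zmultiples x | addOrderOf z = addOrderOf x} : Finset _).map
        (Function.Embedding.subtype _) := by
    ext y
    simp only [zmultiples_eq_zmultiples_iff_of_finite, mem_filter, mem_univ, true_and, mem_map,
      Function.Embedding.coe_subtype, Subtype.exists, addOrderOf_mk, exists_and_left,
      exists_prop, exists_eq_right_right]
    exact and_comm
  rw [hgen, card_map, IsAddCyclic.card_addOrderOf_eq_totient Fintype.card_zmultiples.symm.dvd]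

variable (G) in
open scoped Classical in
theorem card_cyclicAddSubgroups_eq_sum [Fintype G] :
    (Nat.card {H : AddSubgroup G // ∃ g, H = AddSubgroup.closure {g}} : ℚ) =
      ∑ x : G, 1 / ((addOrderOf x).totient : ℚ) := by
  have hcard : Nat.card {H : AddSubgroup G // ∃ g, H = AddSubgroup.closure {g}} =
      #(univ.image (zmultiples (G := G))) := by
    rw [Nat.card_eq_fintype_card, Fintype.card_subtype]
    congr 1
    ext H
    simp [← zmultiples_eq_closure, eq_comm]
  rw [hcard, ← sum_one_div_card_fiber_eq_card_image]
  simp_rw [card_zmultiples_eq_zmultiples]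

end FiniteAddGroup

section ZModSquare

variable {n : ℕ} [NeZero n]

theorem ZMod.card_nsmul_eq_zero {d : ℕ} (hd : d ∣ n) : #{a : ZMod n | d • a = 0} = d := by
  rw [← sum_card_addOrderOf_eq_card_nsmul_eq_zero (ne_zero_of_dvd_ne_zero (NeZero.ne n) hd),
    sum_congr rfl fun e he => IsAddCyclic.card_addOrderOf_eq_totient ?_, Nat.sum_totient]
  rw [ZMod.card]
  exact (Nat.dvd_of_mem_divisors he).trans hd

theorem card_nsmul_eq_zero_zmod_prod {d : ℕ} (hd : d ∣ n) :
    #{x : ZMod n × ZMod n | d • x = 0} = d ^ 2 := by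
  have hprod : univ.filter (fun x : ZMod n × ZMod n => d • x = 0) =
      univ.filter (fun a : ZMod n => d • a = 0) ×ˢ univ.filter (fun a : ZMod n => d • a = 0) := by
    rw [← filter_product, univ_product_univ]
    simp [Prod.ext_iff]
  rw [hprod, card_product, ZMod.card_nsmul_eq_zero hd, sq]

theorem card_addOrderOf_eq_totient_mul_dedekindPsi {d : ℕ} (hd : d ∣ n) :
    (#{x : ZMod n × ZMod n | addOrderOf x = d} : ℚ) = d.totient * dedekindPsi d := by
  refine Nat.eq_of_sum_divisors_eq_of_dvd
    (f := fun e => (#{x : ZMod n × ZMod n | addOrderOf x = e} : ℚ))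
    (g := fun e => e.totient * dedekindPsi e) (NeZero.ne n) (fun m hm => ?_) hd
  have hm₀ : m ≠ 0 := ne_zero_of_dvd_ne_zero (NeZero.ne n) hm
  simp_rw [totient_mul_dedekindPsi, sum_divisors_jordanTotient 2 hm₀]
  exact_mod_cast (sum_card_addOrderOf_eq_card_nsmul_eq_zero hm₀).trans
    (card_nsmul_eq_zero_zmod_prod hm)

end ZModSquare

theorem cyclic_subgroup_count_square (n : ℕ) (hn : 0 < n) :
    (Nat.card {H : AddSubgroup (ZMod n × ZMod n) // ∃ g, H = AddSubgroup.closure {g}} : ℚ) =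
      ∑ d ∈ n.divisors, (d : ℚ) * ∏ p ∈ d.primeFactors, (1 + 1 / (p : ℚ)) := by
  have : NeZero n := ⟨hn.ne'⟩
  have hord : ∀ x : ZMod n × ZMod n, addOrderOf x ∈ n.divisors := fun x =>
    Nat.mem_divisors.2 ⟨addOrderOf_dvd_of_nsmul_eq_zero (by simp [Prod.ext_iff]), hn.ne'⟩
  rw [card_cyclicAddSubgroups_eq_sum, ← sum_fiberwise_of_maps_to fun x _ => hord x]
  refine sum_congr rfl fun d hd => ?_
  have htot : (d.totient : ℚ) ≠ 0 := by
    exact_mod_cast (Nat.totient_pos.2 (Nat.pos_of_mem_divisors hd)).ne'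
  rw [sum_congr rfl fun x hx => by rw [(mem_filter.1 hx).2], sum_const, nsmul_eq_mul,
    card_addOrderOf_eq_totient_mul_dedekindPsi (Nat.dvd_of_mem_divisors hd), mul_one_div,
    mul_div_cancel_left₀ _ htot, dedekindPsi]
end

section
/- For all positive integers m, n, the identity Σ_{i ∣ m} Σ_{j ∣ n} gcd(i,j) = Σ_{d ∣ gcd(m,n)} φ(d)·τ(m/d)·τ(n/d) holds. -/
/-!
Expand `gcd i j = ∑_{d ∣ gcd i j} φ d` and exchange the order of summation. For a fixed
`d ∣ gcd m n`, the pairs of divisors `(i, j)` of `m` and `n` with `d ∣ i` and `d ∣ j` are counted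
by `τ(m/d) · τ(n/d)`, since `i ↦ i / d` is a bijection from the multiples of `d` dividing `m`
onto the divisors of `m / d`.
-/

open Finset

theorem Finset.sum_sum_ite_and {ι κ M : Type*} [AddCommMonoid M] (s : Finset ι) (t : Finset κ)
    (p : ι → Prop) (q : κ → Prop) [DecidablePred p] [DecidablePred q] (c : M) :
    ∑ i ∈ s, ∑ j ∈ t, (if p i ∧ q j then c else 0) = (#{i ∈ s | p i} * #{j ∈ t | q j}) • c := by
  simp_rw [ite_and, ← ite_sum_zero, ← sum_filter, sum_const, mul_smul]

namespace Nat

theorem card_divisors_filter_dvd {d m : ℕ} (hd : d ∣ m) :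
    #{i ∈ m.divisors | d ∣ i} = #(m / d).divisors := by
  rcases eq_or_ne m 0 with rfl | hm
  · simp
  have hd0 : 0 < d := pos_of_ne_zero (ne_zero_of_dvd_ne_zero hm hd)
  refine card_nbij' (· / d) (· * d) (fun i hi => ?_) (fun k hk => ?_)
    (fun i hi => Nat.div_mul_cancel (mem_filter.1 hi).2) (fun k _ => Nat.mul_div_cancel k hd0)
  · simp only [coe_filter, mem_divisors, mem_coe] at hi ⊢
    exact ⟨Nat.div_dvd_div hi.2 hi.1.1, (Nat.div_pos (le_of_dvd (pos_of_ne_zero hm) hd) hd0).ne'⟩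
  · simp only [coe_filter, mem_divisors, mem_coe] at hk ⊢
    exact ⟨⟨Nat.div_mul_cancel hd ▸ mul_dvd_mul_right hk.1 d, hm⟩, dvd_mul_left d k⟩

theorem gcd_eq_sum_totient_divisors_filter {i j N : ℕ} (h : gcd i j ∣ N) (hN : N ≠ 0) :
    gcd i j = ∑ d ∈ N.divisors with d ∣ i ∧ d ∣ j, φ d := by
  simp_rw [← dvd_gcd_iff, divisors_filter_dvd_of_dvd hN h, sum_totient]

end Nat

theorem gcd_double_sum_identity_general (m n : ℕ) :
    (∑ i ∈ m.divisors, ∑ j ∈ n.divisors, Nat.gcd i j) =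
      ∑ d ∈ (Nat.gcd m n).divisors,
        Nat.totient d * (m / d).divisors.card * (n / d).divisors.card := by
  have expand : ∀ i ∈ m.divisors, ∀ j ∈ n.divisors, Nat.gcd i j =
      ∑ d ∈ (Nat.gcd m n).divisors, if d ∣ i ∧ d ∣ j then Nat.totient d else 0 := by
    intro i hi j hj
    rw [← sum_filter]
    exact Nat.gcd_eq_sum_totient_divisors_filter
      (gcd_dvd_gcd (Nat.dvd_of_mem_divisors hi) (Nat.dvd_of_mem_divisors hj))
      (Nat.gcd_ne_zero_left (Nat.mem_divisors.1 hi).2)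
  calc (∑ i ∈ m.divisors, ∑ j ∈ n.divisors, Nat.gcd i j)
      = ∑ i ∈ m.divisors, ∑ j ∈ n.divisors, ∑ d ∈ (Nat.gcd m n).divisors,
          if d ∣ i ∧ d ∣ j then Nat.totient d else 0 :=
        sum_congr rfl fun i hi => sum_congr rfl (expand i hi)
    _ = ∑ d ∈ (Nat.gcd m n).divisors, ∑ i ∈ m.divisors, ∑ j ∈ n.divisors,
          if d ∣ i ∧ d ∣ j then Nat.totient d else 0 := sum_comm_cycle
    _ = _ := by
      refine sum_congr rfl fun d hd => ?_
      have hdmn := Nat.dvd_of_mem_divisors hd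
      rw [sum_sum_ite_and, Nat.card_divisors_filter_dvd (hdmn.trans (Nat.gcd_dvd_left m n)),
        Nat.card_divisors_filter_dvd (hdmn.trans (Nat.gcd_dvd_right m n)), smul_eq_mul]
      ring

theorem gcd_double_sum_identity (m n : ℕ) (hm : 0 < m) (hn : 0 < n) :
    (∑ i ∈ m.divisors, ∑ j ∈ n.divisors, Nat.gcd i j) =
      ∑ d ∈ (Nat.gcd m n).divisors,
        Nat.totient d * (m / d).divisors.card * (n / d).divisors.card :=
  gcd_double_sum_identity_general m n
end

section
/- For every prime p and integers 1 ≤ a ≤ b, the total number of subgroups of ℤ_{p^a} × ℤ_{p^b} equals ((b-a+1)p^{a+2} - (b-a-1)p^{a+1} - (a+b+3)p + (a+b+1)) / (p-1)². -/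
/-!
A subgroup `H ≤ A × B` is determined by its projection `P ≤ A`, its slice
`S = {y | (0, y) ∈ H} ≤ B` and the homomorphism `P → B ⧸ S` sending `x` to the class of any `y`
with `(x, y) ∈ H` (Goursat). For cyclic `A` and `B` the subgroups `P` and `S` are indexed by the
divisors of `|A|` and `|B|` through their orders, and `Hom(P, B ⧸ S)` has `gcd(|P|, |B| / |S|)`
elements, so the count is `∑_{c ∣ |A|} ∑_{d ∣ |B|} gcd(c, d)`. For `A = ℤ/p^a` and `B = ℤ/p^b` this
is the double geometric sum `∑_{i ≤ a} ∑_{j ≤ b} p^(min i j)`, summed in closed form for `a ≤ b`.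
-/

open AddSubgroup Finset

instance AddMonoidHom.finite {M N : Type*} [AddZeroClass M] [AddZeroClass N] [Finite M] [Finite N] :
    Finite (M →+ N) :=
  Finite.of_injective _ DFunLike.coe_injective

instance QuotientAddGroup.isAddCyclic {G : Type*} [AddGroup G] [IsAddCyclic G] (N : AddSubgroup G)
    [N.Normal] : IsAddCyclic (G ⧸ N) :=
  isAddCyclic_of_surjective _ (QuotientAddGroup.mk'_surjective N)

section Cyclic

variable {G : Type*} [AddCommGroup G] [IsAddCyclic G] [Finite G]

theorem IsAddCyclic.eq_ker_nsmul_card (H : AddSubgroup G) :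
    H = (nsmulAddMonoidHom (Nat.card H) : G →+ G).ker := by
  refine eq_of_le_of_card_ge (fun x hx => ?_) ?_
  · have : Nat.card H • (⟨x, hx⟩ : H) = 0 := card_nsmul_eq_zero'
    rw [AddMonoidHom.mem_ker, nsmulAddMonoidHom_apply]
    exact congrArg Subtype.val this
  · rw [IsAddCyclic.card_nsmulAddMonoidHom_ker, Nat.gcd_eq_right (card_addSubgroup_dvd_card H)]

noncomputable def IsAddCyclic.addSubgroupEquivDivisors : AddSubgroup G ≃ (Nat.card G).divisors where
  toFun H := ⟨Nat.card H, Nat.mem_divisors.2 ⟨card_addSubgroup_dvd_card H, Nat.card_pos.ne'⟩⟩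
  invFun d := (nsmulAddMonoidHom d.1 : G →+ G).ker
  left_inv H := (eq_ker_nsmul_card H).symm
  right_inv d := Subtype.ext <| by
    change Nat.card (nsmulAddMonoidHom d.1 : G →+ G).ker = d
    rw [IsAddCyclic.card_nsmulAddMonoidHom_ker, Nat.gcd_eq_right (Nat.dvd_of_mem_divisors d.2)]

theorem IsAddCyclic.sum_addSubgroup_card [Fintype (AddSubgroup G)] {M : Type*} [AddCommMonoid M]
    (f : ℕ → M) : ∑ H : AddSubgroup G, f (Nat.card H) = ∑ d ∈ (Nat.card G).divisors, f d := by
  rw [← sum_coe_sort (Nat.card G).divisors f]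
  exact Fintype.sum_equiv addSubgroupEquivDivisors _ _ fun _ => rfl

end Cyclic

noncomputable def ZMod.addMonoidHomEquiv (n : ℕ) (A : Type*) [AddCommGroup A] :
    (ZMod n →+ A) ≃ {x : A // n • x = 0} :=
  (ZMod.lift n).symm.trans <| (zmultiplesHom A).symm.subtypeEquiv fun f => by
    simp [← map_nsmul]

theorem IsAddCyclic.card_addMonoidHom {G K : Type*} [AddCommGroup G] [AddCommGroup K]
    [IsAddCyclic G] [IsAddCyclic K] [Finite K] :
    Nat.card (G →+ K) = (Nat.card G).gcd (Nat.card K) := calc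
  Nat.card (G →+ K) = Nat.card (ZMod (Nat.card G) →+ K) :=
    Nat.card_congr (zmodAddCyclicAddEquiv ‹_›).addMonoidHomCongrLeftEquiv.symm
  _ = Nat.card (nsmulAddMonoidHom (Nat.card G) : K →+ K).ker :=
    Nat.card_congr (ZMod.addMonoidHomEquiv _ K)
  _ = _ := by rw [IsAddCyclic.card_nsmulAddMonoidHom_ker, Nat.gcd_comm]

namespace AddSubgroup

variable {A B : Type*} [AddCommGroup A] [AddCommGroup B]

def goursatOfHom (P : AddSubgroup A) (S : AddSubgroup B) (φ : P →+ B ⧸ S) :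
    AddSubgroup (A × B) where
  carrier := {z | ∃ h : z.1 ∈ P, φ ⟨z.1, h⟩ = z.2}
  zero_mem' := ⟨P.zero_mem, φ.map_zero⟩
  add_mem' := by
    rintro z z' ⟨hz, hφ⟩ ⟨hz', hφ'⟩
    exact ⟨P.add_mem hz hz', by simpa [hφ, hφ'] using φ.map_add ⟨_, hz⟩ ⟨_, hz'⟩⟩
  neg_mem' := by
    rintro z ⟨hz, hφ⟩
    exact ⟨P.neg_mem hz, (φ.map_neg ⟨_, hz⟩).trans (by rw [hφ]; rfl)⟩

@[simp]
theorem mem_goursatOfHom {P : AddSubgroup A} {S : AddSubgroup B} {φ : P →+ B ⧸ S} {z : A × B} :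
    z ∈ goursatOfHom P S φ ↔ ∃ h : z.1 ∈ P, φ ⟨z.1, h⟩ = z.2 := Iff.rfl

theorem ker_fst_addSubgroupMap_le_ker_mk_snd (H : AddSubgroup (A × B)) :
    ((AddMonoidHom.fst A B).addSubgroupMap H).ker ≤
      ((QuotientAddGroup.mk' H.goursatSnd).comp ((AddMonoidHom.snd A B).comp H.subtype)).ker := by
  rintro ⟨⟨x, y⟩, hz⟩ h
  obtain rfl : x = 0 := congrArg Subtype.val h
  simpa using hz

noncomputable def goursatHom (H : AddSubgroup (A × B)) :
    H.map (AddMonoidHom.fst A B) →+ B ⧸ H.goursatSnd :=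
  ((AddMonoidHom.fst A B).addSubgroupMap H).liftOfSurjective
    ((AddMonoidHom.fst A B).addSubgroupMap_surjective H) ⟨_, ker_fst_addSubgroupMap_le_ker_mk_snd H⟩

theorem goursatHom_apply {H : AddSubgroup (A × B)} {z : A × B} (hz : z ∈ H) :
    goursatHom H ⟨z.1, mem_map_of_mem _ hz⟩ = z.2 :=
  AddMonoidHom.liftOfRightInverse_comp_apply _ _ _
    ⟨_, ker_fst_addSubgroupMap_le_ker_mk_snd H⟩ ⟨z, hz⟩

theorem sigma_addMonoidHom_quotient_ext {P P' : AddSubgroup A} {S S' : AddSubgroup B}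
    (hP : P = P') (hS : S = S') {φ : P →+ B ⧸ S} {φ' : P' →+ B ⧸ S'}
    (h : ∀ (x : A) (hx : x ∈ P) (hx' : x ∈ P') (y : B), φ ⟨x, hx⟩ = y → φ' ⟨x, hx'⟩ = y) :
    (⟨P, S, φ⟩ : Σ (P : AddSubgroup A) (S : AddSubgroup B), P →+ B ⧸ S) = ⟨P', S', φ'⟩ := by
  subst hP hS
  congr
  ext ⟨x, hx⟩
  obtain ⟨y, hy⟩ := QuotientAddGroup.mk_surjective (φ ⟨x, hx⟩)
  rw [← hy, h x hx hx y hy.symm]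

theorem map_fst_goursatOfHom (P : AddSubgroup A) (S : AddSubgroup B) (φ : P →+ B ⧸ S) :
    (goursatOfHom P S φ).map (AddMonoidHom.fst A B) = P := by
  ext x
  refine ⟨fun ⟨z, ⟨hz, _⟩, hzx⟩ => hzx ▸ hz, fun hx => ?_⟩
  obtain ⟨y, hy⟩ := QuotientAddGroup.mk_surjective (φ ⟨x, hx⟩)
  exact ⟨(x, y), mem_goursatOfHom.2 ⟨hx, hy.symm⟩, rfl⟩

theorem goursatSnd_goursatOfHom (P : AddSubgroup A) (S : AddSubgroup B) (φ : P →+ B ⧸ S) :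
    (goursatOfHom P S φ).goursatSnd = S := by
  ext y
  rw [mem_goursatSnd, mem_goursatOfHom, ← QuotientAddGroup.eq_zero_iff y]
  exact ⟨fun ⟨_, h⟩ => h.symm.trans φ.map_zero, fun h => ⟨P.zero_mem, φ.map_zero.trans h.symm⟩⟩

variable (A B) in
noncomputable def goursatEquiv :
    AddSubgroup (A × B) ≃ Σ (P : AddSubgroup A) (S : AddSubgroup B), P →+ B ⧸ S where
  toFun H := ⟨H.map (AddMonoidHom.fst A B), H.goursatSnd, goursatHom H⟩
  invFun t := goursatOfHom t.1 t.2.1 t.2.2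
  left_inv H := by
    ext ⟨x, y⟩
    rw [mem_goursatOfHom]
    constructor
    · rintro ⟨hx, hφ⟩
      obtain ⟨⟨x, y'⟩, hz, rfl⟩ := mem_map.1 hx
      have hy : (y' : B ⧸ H.goursatSnd) = y := (goursatHom_apply hz).symm.trans hφ
      rw [QuotientAddGroup.eq, mem_goursatSnd] at hy
      simpa using H.add_mem hz hy
    · intro h
      exact ⟨mem_map_of_mem _ h, goursatHom_apply h⟩
  right_inv := fun ⟨P, S, φ⟩ =>
    (sigma_addMonoidHom_quotient_ext (map_fst_goursatOfHom P S φ).symm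
      (goursatSnd_goursatOfHom P S φ).symm fun x hx _ y hy =>
        goursatHom_apply (z := (x, y)) (mem_goursatOfHom.2 ⟨hx, hy⟩)).symm

end AddSubgroup

theorem card_addSubgroup_prod_of_isAddCyclic (A B : Type*) [AddCommGroup A] [AddCommGroup B]
    [IsAddCyclic A] [IsAddCyclic B] [Finite A] [Finite B] :
    Nat.card (AddSubgroup (A × B)) =
      ∑ c ∈ (Nat.card A).divisors, ∑ d ∈ (Nat.card B).divisors, c.gcd d := by
  have : Fintype (AddSubgroup A) := .ofFinite _
  have : Fintype (AddSubgroup B) := .ofFinite _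
  have index_eq (S : AddSubgroup B) : S.index = Nat.card B / Nat.card S := by
    rw [← S.card_mul_index, Nat.mul_div_cancel_left _ Nat.card_pos]
  calc Nat.card (AddSubgroup (A × B))
      = ∑ P : AddSubgroup A, ∑ S : AddSubgroup B, (Nat.card P).gcd (Nat.card B / Nat.card S) := by
        rw [Nat.card_congr (goursatEquiv A B), Nat.card_sigma]
        simp only [Nat.card_sigma, IsAddCyclic.card_addMonoidHom, ← index_eq_card, index_eq]
    _ = ∑ P : AddSubgroup A, ∑ d ∈ (Nat.card B).divisors, (Nat.card P).gcd d :=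
        sum_congr rfl fun P _ =>
          (IsAddCyclic.sum_addSubgroup_card fun d => (Nat.card P).gcd (Nat.card B / d)).trans
            (Nat.sum_div_divisors _ _)
    _ = ∑ c ∈ (Nat.card A).divisors, ∑ d ∈ (Nat.card B).divisors, c.gcd d :=
        IsAddCyclic.sum_addSubgroup_card fun c => ∑ d ∈ (Nat.card B).divisors, c.gcd d

theorem Nat.gcd_pow_pow (p i j : ℕ) : (p ^ i).gcd (p ^ j) = p ^ min i j := by
  rcases le_total i j with h | h
  · rw [Nat.gcd_eq_left (pow_dvd_pow p h), min_eq_left h]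
  · rw [Nat.gcd_eq_right (pow_dvd_pow p h), min_eq_right h]

section GeomSum

variable {K : Type*} [Field K] {q : K}

theorem sum_range_pow_min (hq : q ≠ 1) {i : ℕ} (b : ℕ) (hi : i ≤ b + 1) :
    ∑ j ∈ range (b + 1), q ^ min i j = (q ^ i - 1) / (q - 1) + ((b : K) + 1 - i) * q ^ i := by
  rw [← sum_range_add_sum_Ico _ hi, ← geom_sum_eq hq]
  congr 1
  · exact sum_congr rfl fun j hj => by rw [min_eq_right (mem_range.1 hj).le]
  · rw [sum_congr rfl fun j hj => by rw [min_eq_left (mem_Ico.1 hj).1], sum_const,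
      Nat.card_Ico, nsmul_eq_mul, Nat.cast_sub hi]
    push_cast
    ring

theorem sum_range_sum_range_pow_min (hq : q ≠ 1) {a b : ℕ} (hab : a ≤ b) :
    ∑ i ∈ range (a + 1), ∑ j ∈ range (b + 1), q ^ min i j =
      (((b : K) - a + 1) * q ^ (a + 2) - ((b : K) - a - 1) * q ^ (a + 1)
        - ((a : K) + b + 3) * q + ((a : K) + b + 1)) / (q - 1) ^ 2 := by
  have hq' : q - 1 ≠ 0 := sub_ne_zero.2 hq
  induction a with
  | zero =>
    rw [sum_range_one, sum_range_pow_min hq b (by omega)]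
    field_simp
    ring
  | succ a ih =>
    rw [sum_range_succ, ih (by omega), sum_range_pow_min hq b (by omega)]
    field_simp
    push_cast
    ring

end GeomSum

theorem card_addSubgroup_zmod_prime_pow_prod {p : ℕ} (hp : p.Prime) (a b : ℕ) :
    Nat.card (AddSubgroup (ZMod (p ^ a) × ZMod (p ^ b))) =
      ∑ i ∈ range (a + 1), ∑ j ∈ range (b + 1), p ^ min i j := by
  have : NeZero (p ^ a) := ⟨pow_ne_zero a hp.ne_zero⟩
  have : NeZero (p ^ b) := ⟨pow_ne_zero b hp.ne_zero⟩
  simp only [card_addSubgroup_prod_of_isAddCyclic, Nat.card_zmod, Nat.divisors_prime_pow hp,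
    sum_map, Function.Embedding.coeFn_mk, Nat.gcd_pow_pow]

theorem subgroup_count_prime_powers_general (p : ℕ) (hp : p.Prime) (a b : ℕ)
    (hab : a ≤ b) :
    (Nat.card (AddSubgroup (ZMod (p ^ a) × ZMod (p ^ b))) : ℚ) =
      (((b : ℚ) - a + 1) * p ^ (a + 2) - ((b : ℚ) - a - 1) * p ^ (a + 1)
          - ((a : ℚ) + b + 3) * p + ((a : ℚ) + b + 1)) / ((p : ℚ) - 1) ^ 2 := by
  have hp1 : (p : ℚ) ≠ 1 := by exact_mod_cast hp.one_lt.ne'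
  rw [card_addSubgroup_zmod_prime_pow_prod hp]
  push_cast
  exact sum_range_sum_range_pow_min hp1 hab

theorem subgroup_count_prime_powers (p : ℕ) (hp : p.Prime) (a b : ℕ)
    (ha : 1 ≤ a) (hab : a ≤ b) :
    (Nat.card (AddSubgroup (ZMod (p ^ a) × ZMod (p ^ b))) : ℚ) =
      (((b : ℚ) - a + 1) * p ^ (a + 2) - ((b : ℚ) - a - 1) * p ^ (a + 1)
          - ((a : ℚ) + b + 3) * p + ((a : ℚ) + b + 1)) / ((p : ℚ) - 1) ^ 2 :=
  subgroup_count_prime_powers_general p hp a b hab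
end
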